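/- Let 0 < ℓ ≪ a ≪ b and m > 0 with mℓ ≫ 1 (specifically suppose 2^n exp(-n m ℓ) ≤ exp(-n m ℓ/2) for all relevant n, i.e. m ℓ ≥ 2 log 2). Suppose y : [a,b] → ℝ satisfies: for every t ∈ [a,b] there is an interval [c_t,d_t] ⊆ [a,b] of length at most ℓ containing t such that |y(t)| ≤ e^{-mℓ}(|y(c_t)| + |y(d_t)|). Then for every t ∈ [2a, b/2], |y(t)| ≤ M exp(-m t/8), where M = sup_{[a,b]} |y|. -/

import Mathlib

/-! Each application of the two-point estimate costs a factor `2 e^{-mℓ} ≤ e^{-mℓ/2}` and moves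
the evaluation points at most `ℓ`, so starting from `t` it can be iterated `n` times as long as
`[t - nℓ, t + nℓ] ⊆ [a, b]`. For `t ∈ [2a, b/2]` some `n` with `t/4 ≤ nℓ ≤ t/2` is admissible,
giving `|y t| ≤ e^{-nmℓ/2} M ≤ e^{-mt/8} M`. -/

open Set Real

theorem abs_le_two_mul_pow_mul_of_le_mul_add_abs {a b ℓ q M : ℝ} {y : ℝ → ℝ}
    (hℓ : 0 ≤ ℓ) (hq : 0 ≤ q) (hM : ∀ t ∈ Icc a b, |y t| ≤ M)
    (hstep : ∀ t ∈ Icc a b, ∃ c d : ℝ, c ≤ t ∧ t ≤ d ∧ d - c ≤ ℓ ∧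
      |y t| ≤ q * (|y c| + |y d|)) :
    ∀ n : ℕ, ∀ t ∈ Icc (a + n * ℓ) (b - n * ℓ), |y t| ≤ (2 * q) ^ n * M := by
  intro n
  induction n with
  | zero => simpa using hM
  | succ n ih =>
    rintro t ⟨hat, htb⟩
    push_cast at hat htb
    have hnℓ : 0 ≤ (n : ℝ) * ℓ := by positivity
    obtain ⟨c, d, hct, htd, hdc, hyt⟩ := hstep t ⟨by linarith, by linarith⟩
    have hc := ih c ⟨by linarith, by linarith⟩
    have hd := ih d ⟨by linarith, by linarith⟩
    calc |y t| ≤ q * (|y c| + |y d|) := hyt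
      _ ≤ q * ((2 * q) ^ n * M + (2 * q) ^ n * M) := by gcongr
      _ = (2 * q) ^ (n + 1) * M := by ring

theorem exists_nat_mul_mem_Icc_div_four_div_two {ℓ t : ℝ} (hℓ : 0 < ℓ) (ht : 2 * ℓ ≤ t) :
    ∃ n : ℕ, (n : ℝ) * ℓ ∈ Icc (t / 4) (t / 2) := by
  have hx : 1 ≤ t / (2 * ℓ) := by rwa [le_div_iff₀ (by positivity), one_mul]
  refine ⟨⌊t / (2 * ℓ)⌋₊, ?_, ?_⟩
  · have h := (Nat.div_two_lt_floor hx).le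
    calc t / 4 = t / (2 * ℓ) / 2 * ℓ := by field_simp; ring
      _ ≤ _ := by gcongr
  · have h := Nat.floor_le (zero_le_one.trans hx)
    calc _ ≤ t / (2 * ℓ) * ℓ := by gcongr
      _ = t / 2 := by field_simp

theorem two_mul_exp_neg_le_exp_neg_div_two {x : ℝ} (hx : 2 * log 2 ≤ x) :
    2 * exp (-x) ≤ exp (-x / 2) := by
  calc 2 * exp (-x) = exp (log 2 + -x) := by rw [exp_add, exp_log two_pos]
    _ ≤ exp (-x / 2) := exp_le_exp.mpr (by linarith)

theorem poisson_iteration_decay_general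
    (a b ℓ m M : ℝ) (y : ℝ → ℝ)
    (hℓ : 0 < ℓ) (hℓa : ℓ ≤ a)
    (hmℓ : 2 * Real.log 2 ≤ m * ℓ)
    (hM : ∀ t ∈ Set.Icc a b, |y t| ≤ M)
    (hdecay : ∀ t ∈ Set.Icc a b, ∃ c d : ℝ, a ≤ c ∧ c ≤ t ∧ t ≤ d ∧ d ≤ b ∧
      d - c ≤ ℓ ∧ |y t| ≤ Real.exp (-(m * ℓ)) * (|y c| + |y d|)) :
    ∀ t ∈ Set.Icc (2 * a) (b / 2), |y t| ≤ M * Real.exp (-(m * t) / 8) := by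
  rintro t ⟨hat, htb⟩
  have hm : 0 < m :=
    pos_of_mul_pos_left ((by positivity : (0 : ℝ) < 2 * log 2).trans_le hmℓ) hℓ.le
  have hM0 : 0 ≤ M := (abs_nonneg _).trans (hM t ⟨by linarith, by linarith⟩)
  obtain ⟨n, hn4, hn2⟩ := exists_nat_mul_mem_Icc_div_four_div_two (t := t) hℓ (by linarith)
  have hiter := abs_le_two_mul_pow_mul_of_le_mul_add_abs hℓ.le (exp_nonneg _) hM
    (fun s hs ↦ (hdecay s hs).imp fun c ⟨d, _, hcs, hsd, _, hdc, hys⟩ ↦ ⟨d, hcs, hsd, hdc, hys⟩)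
    n t ⟨by linarith, by linarith⟩
  calc |y t| ≤ (2 * exp (-(m * ℓ))) ^ n * M := hiter
    _ ≤ exp (-(m * ℓ) / 2) ^ n * M := by gcongr; exact two_mul_exp_neg_le_exp_neg_div_two hmℓ
    _ = exp (-(m * (n * ℓ)) / 2) * M := by rw [← exp_nat_mul]; ring_nf
    _ ≤ exp (-(m * t) / 8) * M :=
        mul_le_mul_of_nonneg_right (exp_le_exp.mpr (by nlinarith)) hM0
    _ = M * exp (-(m * t) / 8) := mul_comm _ _

/-- Iteration of the Poisson formula: suppose `0 < ℓ ≤ a`, `4a ≤ b`, `m > 0` with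
`m ℓ ≥ 2 log 2`, and for every `t ∈ [a,b]` there is an interval `[c,d] ⊆ [a,b]` of length at
most `ℓ` containing `t` with `|y t| ≤ e^{-mℓ} (|y c| + |y d|)`.  Then for every
`t ∈ [2a, b/2]`, `|y t| ≤ M exp (-m t / 8)` where `M` bounds `|y|` on `[a,b]`. -/
theorem poisson_iteration_decay
    (a b ℓ m M : ℝ) (y : ℝ → ℝ)
    (hℓ : 0 < ℓ) (hℓa : ℓ ≤ a) (hab : 4 * a ≤ b) (hm : 0 < m)
    (hmℓ : 2 * Real.log 2 ≤ m * ℓ)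
    (hM : ∀ t ∈ Set.Icc a b, |y t| ≤ M)
    (hdecay : ∀ t ∈ Set.Icc a b, ∃ c d : ℝ, a ≤ c ∧ c ≤ t ∧ t ≤ d ∧ d ≤ b ∧
      d - c ≤ ℓ ∧ |y t| ≤ Real.exp (-(m * ℓ)) * (|y c| + |y d|)) :
    ∀ t ∈ Set.Icc (2 * a) (b / 2), |y t| ≤ M * Real.exp (-(m * t) / 8) :=
  poisson_iteration_decay_general a b ℓ m M y hℓ hℓa hmℓ hM hdecay
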